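/- Let (u₀,v₀) be a standard pair and F₁, F₂ cdf's. If x₀ is an up-crossing point for the pair (F₁,F₂), i.e., F₁(x₀⁻) ≤ F₂(x₀⁻) ≤ F₂(x₀) ≤ F₁(x₀), with F₁(x) < F₂(x) for x slightly below the crossing interval and F₁(x) > F₂(x) for x slightly above it, then ∫_{-∞}^{x₀} v₀(F₁(x)) du₀(x) ≥ ∫_{-∞}^{x₀} v₀(F₂(x)) du₀(x) implies ∫_{0}^{p} u₀(F₁⁻¹(α)) dv₀(α) ≤ ∫_{0}^{p} u₀(F₂⁻¹(α)) dv₀(α) for all p ∈ [F₂(x₀⁻), F₂(x₀)]. Conversely, if α₀ is an up-crossing value of (F₁⁻¹, F₂⁻¹), then ∫_{0}^{α₀} u₀(F₁⁻¹(α)) dv₀(α) ≤ ∫_{0}^{α₀} u₀(F₂⁻¹(α)) dv₀(α) implies ∫_{-∞}^{c} v₀(F₁(x)) du₀(x) ≥ ∫_{-∞}^{c} v₀(F₂(x)) du₀(x) for all c ∈ [F₂⁻¹(α₀), F₂⁻¹(α₀⁺)]. -/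

import Mathlib

open MeasureTheory Set Filter Topology Function

noncomputable section

/-- A cumulative distribution function: non-decreasing, right-continuous,
with limit 0 at -∞ and limit 1 at +∞. -/
structure IsCDF (F : ℝ → ℝ) : Prop where
  mono : Monotone F
  right_cont : ∀ x, ContinuousWithinAt F (Ici x) x
  tendsto_atBot : Tendsto F atBot (𝓝 0)
  tendsto_atTop : Tendsto F atTop (𝓝 1)

/-- The quantile function `F⁻¹ (α) = inf {x | F x ≥ α}`. -/
def qf (F : ℝ → ℝ) (α : ℝ) : ℝ := sInf {x | α ≤ F x}

/-- `(u₀, v₀)` is a standard pair: `u₀ : ℝ → ℝ` non-decreasing left-continuous,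
`v₀ : [0,1] → [0,1]` non-decreasing right-continuous with `v₀ 0 = 0` and `v₀ (1⁻) = 1`. -/
structure StandardPair (u₀ v₀ : ℝ → ℝ) : Prop where
  u_mono : Monotone u₀
  u_left_cont : ∀ x, ContinuousWithinAt u₀ (Iic x) x
  v_mono : MonotoneOn v₀ (Icc 0 1)
  v_right_cont : ∀ α ∈ Ico (0:ℝ) 1, Tendsto v₀ (𝓝[>] α) (𝓝 (v₀ α))
  v_mem : ∀ α ∈ Icc (0:ℝ) 1, v₀ α ∈ Icc (0:ℝ) 1
  v_zero : v₀ 0 = 0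
  v_one : Tendsto v₀ (𝓝[<] (1:ℝ)) (𝓝 1)

/-- `μ` is the Lebesgue–Stieltjes measure of the left-continuous integrator `g` on `ℝ`:
`μ [a,b) = g b - g a`. -/
def IsLSL (g : ℝ → ℝ) (μ : Measure ℝ) : Prop :=
  ∀ a b : ℝ, a ≤ b → μ (Ico a b) = ENNReal.ofReal (g b - g a)

/-- `μ` is the Lebesgue–Stieltjes measure of the right-continuous integrator `g` on `ℝ`:
`μ (a,b] = g b - g a`. -/
def IsLSR (g : ℝ → ℝ) (μ : Measure ℝ) : Prop :=
  ∀ a b : ℝ, a ≤ b → μ (Ioc a b) = ENNReal.ofReal (g b - g a)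

/-- `μ` behaves on `[0,1]` as the Lebesgue–Stieltjes measure of the right-continuous
integrator `g`: `μ (a,b] = g b - g a` for `0 ≤ a ≤ b ≤ 1`. -/
def IsLSR01 (g : ℝ → ℝ) (μ : Measure ℝ) : Prop :=
  ∀ a b : ℝ, 0 ≤ a → a ≤ b → b ≤ 1 → μ (Ioc a b) = ENNReal.ofReal (g b - g a)

/-- `μ` behaves inside `(0,1)` as the Lebesgue–Stieltjes measure of the left-continuous
integrator `g`: `μ [a,b) = g b - g a` for `0 < a ≤ b < 1`. -/
def IsLSL01 (g : ℝ → ℝ) (μ : Measure ℝ) : Prop :=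
  ∀ a b : ℝ, 0 < a → a ≤ b → b < 1 → μ (Ico a b) = ENNReal.ofReal (g b - g a)

/-- `u` has density `k` with respect to the Stieltjes measure `μ₀` of `u₀`
(left-continuous convention `[a,b)`), i.e. `du = k du₀`:
`u b - u a = ∫_{[a,b)} k dμ₀` for all `a ≤ b`. -/
def HasDensity (u k : ℝ → ℝ) (μ₀ : Measure ℝ) : Prop :=
  ∀ a b : ℝ, a ≤ b → u b - u a = ∫ s in Ico a b, k s ∂μ₀

/-- The upper `(u₀,v₀)`-ordering `F₁ ≺^{(u₀,v₀)} F₂`: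
`∫ v₀(F₁) du ≥ ∫ v₀(F₂) du` for every non-decreasing `u₀`-concave `u`, where such a `u`
is encoded through its Radon–Nikodym density `k = du/du₀` (bounded, non-negative,
non-increasing), so that `du = k dμ₀`.  Here `μ₀` is the Stieltjes measure of `u₀`. -/
def UpperOrder (v₀ F₁ F₂ : ℝ → ℝ) (μ₀ : Measure ℝ) : Prop :=
  ∀ k : ℝ → ℝ, Antitone k → (∀ x, 0 ≤ k x) → (∃ C, ∀ x, k x ≤ C) →
    ∫⁻ x, ENNReal.ofReal (v₀ (F₂ x)) ∂(μ₀.withDensity fun x => ENNReal.ofReal (k x)) ≤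
      ∫⁻ x, ENNReal.ofReal (v₀ (F₁ x)) ∂(μ₀.withDensity fun x => ENNReal.ofReal (k x))

/-- The lower `(u₀,v₀)`-ordering `F₁ ≺_{(u₀,v₀)} F₂`:
`-∫ (1 - v₀(F₁)) du ≥ -∫ (1 - v₀(F₂)) du` for every non-decreasing `u₀`-convex `u`,
encoded through its density `m = du/du₀` (non-negative, non-decreasing). -/
def LowerOrder (v₀ F₁ F₂ : ℝ → ℝ) (μ₀ : Measure ℝ) : Prop :=
  ∀ m : ℝ → ℝ, Monotone m → (∀ x, 0 ≤ m x) →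
    ∫⁻ x, ENNReal.ofReal (1 - v₀ (F₁ x)) ∂(μ₀.withDensity fun x => ENNReal.ofReal (m x)) ≤
      ∫⁻ x, ENNReal.ofReal (1 - v₀ (F₂ x)) ∂(μ₀.withDensity fun x => ENNReal.ofReal (m x))

/-- Condition (a): `∫_ℝ |u₀(x)| dv₀(F(x)) < ∞`, where `ν` is the Stieltjes measure
of `v₀ ∘ F`. -/
def CondA (u₀ : ℝ → ℝ) (ν : Measure ℝ) : Prop :=
  ∫⁻ x, ENNReal.ofReal |u₀ x| ∂ν < ⊤

/-- Condition (b): `∫_{[0,p)} v₀(α) du₀(F⁻¹(α)) < ∞` for all `p < 1`, where `lam` is the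
Stieltjes measure of `u₀ ∘ F⁻¹` on `(0,1)`. -/
def CondB (v₀ : ℝ → ℝ) (lam : Measure ℝ) : Prop :=
  ∀ p : ℝ, p < 1 → ∫⁻ α in Ioo 0 p, ENNReal.ofReal (v₀ α) ∂lam < ⊤

/-- Condition (b)': `∫_ℝ (1 - v₀(F(x))) du₀(x) < ∞`, where `μ₀` is the Stieltjes
measure of `u₀`. -/
def CondB' (v₀ F : ℝ → ℝ) (μ₀ : Measure ℝ) : Prop :=
  ∫⁻ x, ENNReal.ofReal (1 - v₀ (F x)) ∂μ₀ < ⊤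

/-! Both sides of each inequality are the two iterated integrals of the `du₀ ⊗ dv₀`-measure of
the region `{(x, α) : x < c, α ≤ F x}`. If `F ≤ p` on `(-∞, c)` and `p ≤ F c`, its `α`-sections
for `0 < α ≤ p` are `[F⁻¹ α, c)`, so Tonelli gives
`∫_{(0,p]} u₀ (F⁻¹ α) dv₀ = u₀ c · v₀ p - ∫_{(-∞,c)} v₀ (F x) du₀`,
where the last integral is finite by condition (a). At an up-crossing point `x₀` and
`p ∈ [F₂(x₀⁻), F₂ x₀]`, both cdf's satisfy this with `c = x₀`; at an up-crossing value `α₀` and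
`c ∈ [F₂⁻¹ α₀, F₂⁻¹ (α₀⁺)]`, both satisfy it with `p = α₀`. Either way the two inequalities
differ only by a sign. -/

namespace IsCDF

variable {F : ℝ → ℝ}

lemma nonneg (hF : IsCDF F) (x : ℝ) : 0 ≤ F x :=
  le_of_tendsto hF.tendsto_atBot <| by
    filter_upwards [eventually_le_atBot x] with y hy using hF.mono hy

lemma le_one (hF : IsCDF F) (x : ℝ) : F x ≤ 1 :=
  ge_of_tendsto hF.tendsto_atTop <| by
    filter_upwards [eventually_ge_atTop x] with y hy using hF.mono hy

lemma nonempty_setOf_le (hF : IsCDF F) {α : ℝ} (hα : α < 1) : {x | α ≤ F x}.Nonempty :=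
  (hF.tendsto_atTop.eventually_const_le hα).exists

lemma bddBelow_setOf_le (hF : IsCDF F) {α : ℝ} (hα : 0 < α) : BddBelow {x | α ≤ F x} := by
  obtain ⟨N, hN⟩ := eventually_atBot.1 (hF.tendsto_atBot.eventually_lt_const hα)
  exact ⟨N, fun y hy => not_lt.1 fun hyN => (hN y hyN.le).not_ge hy⟩

lemma qf_le (hF : IsCDF F) {α x : ℝ} (hα : 0 < α) (h : α ≤ F x) : qf F α ≤ x :=
  csInf_le (hF.bddBelow_setOf_le hα) h

lemma qf_le_iff (hF : IsCDF F) {α x : ℝ} (hα : 0 < α) (hα1 : α < 1) :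
    qf F α ≤ x ↔ α ≤ F x := by
  refine ⟨fun h => le_trans ?_ (hF.mono h), hF.qf_le hα⟩
  have above : ∀ y, qf F α < y → α ≤ F y := fun y hy => by
    obtain ⟨z, hz, hzy⟩ := (csInf_lt_iff (hF.bddBelow_setOf_le hα) (hF.nonempty_setOf_le hα1)).1 hy
    exact hz.trans (hF.mono hzy.le)
  refine ge_of_tendsto ((hF.right_cont _).mono_left (nhdsWithin_mono _ Ioi_subset_Ici_self)) ?_
  filter_upwards [self_mem_nhdsWithin] with y hy using above y hy

lemma monotoneOn_qf (hF : IsCDF F) : MonotoneOn (qf F) (Ioo 0 1) := fun _ hα _ hβ hαβ =>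
  csInf_le_csInf (hF.bddBelow_setOf_le hα.1) (hF.nonempty_setOf_le hβ.2)
    fun _ hx => hαβ.trans hx

lemma rightLim_qf_le (hF : IsCDF F) {α β : ℝ} (hα : 0 < α) (hαβ : α < β) (hβ : β < 1) :
    rightLim (qf F) α ≤ qf F β := by
  have hbdd : BddBelow (qf F '' Ioo α 1) :=
    ⟨qf F α, forall_mem_image.2 fun γ hγ =>
      hF.monotoneOn_qf ⟨hα, hγ.1.trans hγ.2⟩ ⟨hα.trans hγ.1, hγ.2⟩ hγ.1.le⟩
  have hmono : MonotoneOn (qf F) (Ioo α 1) := hF.monotoneOn_qf.mono (Ioo_subset_Ioo_left hα.le)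
  rw [rightLim_eq_of_tendsto (hmono.tendsto_nhdsWithin_Ioo_right ⟨β, hαβ, hβ⟩ hbdd)]
  exact csInf_le hbdd ⟨β, ⟨hαβ, hβ⟩, rfl⟩

lemma le_of_lt_rightLim_qf (hF : IsCDF F) {α x : ℝ} (hα : 0 < α)
    (hx : x < rightLim (qf F) α) : F x ≤ α := by
  by_contra! hFx
  obtain ⟨β, hαβ, hβx⟩ := exists_between hFx
  exact hx.not_ge <| (hF.rightLim_qf_le hα hαβ (hβx.trans_le (hF.le_one x))).trans
    (hF.qf_le (hα.trans hαβ) hβx.le)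

end IsCDF

lemma IsLSL.sigmaFinite {g : ℝ → ℝ} {μ : Measure ℝ} (hμ : IsLSL g μ) : SigmaFinite μ := by
  refine ⟨⟨⟨fun n : ℕ => Ico (-(n : ℝ)) n, fun _ => trivial, fun n => ?_, ?_⟩⟩⟩
  · rw [hμ _ _ (by linarith [n.cast_nonneg (α := ℝ)])]
    exact ENNReal.ofReal_lt_top
  · refine iUnion_eq_univ_iff.2 fun x => ?_
    obtain ⟨n, hn⟩ := exists_nat_gt |x|
    exact ⟨n, (abs_lt.1 hn).1.le, (abs_lt.1 hn).2⟩

namespace IsLSR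

variable {g : ℝ → ℝ} {μ : Measure ℝ}

lemma measure_Iic (hμ : IsLSR g μ) (hg : Tendsto g atBot (𝓝 0)) (x : ℝ) :
    μ (Iic x) = ENNReal.ofReal (g x) := by
  have hunion : ⋃ t : ℝ, Ioc (x - t) x = Iic x :=
    Subset.antisymm (iUnion_subset fun _ => Ioc_subset_Iic_self) fun y hy =>
      mem_iUnion.2 ⟨x - y + 1, by simp only [mem_Ioc]; constructor <;> linarith [mem_Iic.1 hy]⟩
  have hmono : Monotone fun t : ℝ => Ioc (x - t) x := fun _ _ h => Ioc_subset_Ioc_left (by linarith)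
  have hlim := tendsto_measure_iUnion_atTop (μ := μ) hmono
  rw [hunion] at hlim
  have hval : (fun t => ENNReal.ofReal (g x - g (x - t))) =ᶠ[atTop] μ ∘ fun t => Ioc (x - t) x := by
    filter_upwards [eventually_ge_atTop 0] with t ht using (hμ _ _ (by linarith)).symm
  have hleft : Tendsto (fun t => g (x - t)) atTop (𝓝 0) :=
    hg.comp (tendsto_atBot_add_const_left _ x tendsto_neg_atTop_atBot)
  have hlim' : Tendsto (fun t => ENNReal.ofReal (g x - g (x - t))) atTop
      (𝓝 (ENNReal.ofReal (g x))) := by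
    simpa using ENNReal.tendsto_ofReal (tendsto_const_nhds.sub hleft)
  exact tendsto_nhds_unique hlim (hlim'.congr' hval)

lemma isFiniteMeasure (hμ : IsLSR g μ) (hg : Tendsto g atBot (𝓝 0)) {C : ℝ}
    (hC : ∀ x, g x ≤ C) : IsFiniteMeasure μ := by
  have hmono : Monotone fun t : ℝ => Iic t := fun _ _ h => Iic_subset_Iic.2 h
  have hlim := tendsto_measure_iUnion_atTop (μ := μ) hmono
  rw [iUnion_Iic] at hlim
  refine ⟨(le_of_tendsto' hlim fun t => ?_).trans_lt (ENNReal.ofReal_lt_top (r := C))⟩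
  simpa only [comp_apply, hμ.measure_Iic hg] using ENNReal.ofReal_le_ofReal (hC t)

end IsLSR

lemma IsLSR01.measure_singleton_one {g : ℝ → ℝ} {μ : Measure ℝ} (hμ : IsLSR01 g μ)
    (hg : Tendsto g (𝓝[<] 1) (𝓝 (g 1))) : μ {1} = 0 := by
  have hlim : Tendsto (fun a => ENNReal.ofReal (g 1 - g a)) (𝓝[<] 1) (𝓝 0) := by
    simpa using ENNReal.tendsto_ofReal ((tendsto_const_nhds (x := g 1)).sub hg)
  refine le_antisymm (ge_of_tendsto hlim ?_) zero_le
  filter_upwards [Ioo_mem_nhdsLT (zero_lt_one' ℝ)] with a ha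
  rw [← hμ a 1 ha.1.le ha.2.le le_rfl]
  exact measure_mono (singleton_subset_iff.2 ⟨ha.2, le_rfl⟩)

namespace StandardPair

variable {u₀ v₀ : ℝ → ℝ}

lemma v_one_eq_one (hp : StandardPair u₀ v₀) : v₀ 1 = 1 := by
  refine le_antisymm (hp.v_mem 1 (by norm_num)).2 (le_of_tendsto hp.v_one ?_)
  filter_upwards [Ioo_mem_nhdsLT (zero_lt_one' ℝ)] with a ha
  exact hp.v_mono ⟨ha.1.le, ha.2.le⟩ (by norm_num) ha.2.le

lemma tendsto_comp_cdf_atBot (hp : StandardPair u₀ v₀) {F : ℝ → ℝ} (hF : IsCDF F) :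
    Tendsto (fun x => v₀ (F x)) atBot (𝓝 0) := by
  have hv : ContinuousWithinAt v₀ (Ici 0) 0 := by
    rw [← continuousWithinAt_Ioi_iff_Ici]
    exact hp.v_right_cont 0 (by norm_num)
  rw [ContinuousWithinAt, hp.v_zero] at hv
  exact hv.comp (tendsto_nhdsWithin_iff.2 ⟨hF.tendsto_atBot, .of_forall hF.nonneg⟩)

end StandardPair

lemma setLIntegral_Iio_measure_Iic_eq {μ ρ : Measure ℝ} [SFinite μ] [SFinite ρ] {f : ℝ → ℝ}
    (hf : Measurable f) (c : ℝ) :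
    ∫⁻ x in Iio c, ρ (Iic (f x)) ∂μ = ∫⁻ y, μ (Iio c ∩ {x | y ≤ f x}) ∂ρ := by
  set S := {z : ℝ × ℝ | z.1 < c ∧ z.2 ≤ f z.1}
  have hS : MeasurableSet S := (measurableSet_lt measurable_fst measurable_const).inter
    (measurableSet_le measurable_snd (hf.comp measurable_fst))
  calc ∫⁻ x in Iio c, ρ (Iic (f x)) ∂μ = ∫⁻ x, ρ (Prod.mk x ⁻¹' S) ∂μ := by
        rw [← lintegral_indicator measurableSet_Iio]
        refine lintegral_congr fun x => ?_
        by_cases hx : x < c <;> simp [S, hx, Iic_def]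
    _ = μ.prod ρ S := (Measure.prod_apply hS).symm
    _ = ∫⁻ y, μ (Iio c ∩ {x | y ≤ f x}) ∂ρ := Measure.prod_apply_symm hS

lemma IsLSL.setLIntegral_Iio_lt_top {u₀ g : ℝ → ℝ} {μ₀ ν : Measure ℝ} (hμ₀ : IsLSL u₀ μ₀)
    [IsFiniteMeasure ν] (hν : ∀ x, ν (Iic x) = ENNReal.ofReal (g x)) (ha : CondA u₀ ν) (c : ℝ) :
    ∫⁻ x in Iio c, ENNReal.ofReal (g x) ∂μ₀ < ⊤ := by
  have := hμ₀.sigmaFinite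
  simp_rw [← hν]
  have hbound : ∀ y, μ₀ (Ico y c) ≤ ENNReal.ofReal |u₀ c| + ENNReal.ofReal |u₀ y| := by
    intro y
    rcases le_or_gt y c with hyc | hcy
    · rw [hμ₀ y c hyc]
      exact (ENNReal.ofReal_le_ofReal (by linarith [le_abs_self (u₀ c), neg_abs_le (u₀ y)])).trans
        ENNReal.ofReal_add_le
    · simp [Ico_eq_empty_of_le hcy.le]
  calc ∫⁻ x in Iio c, ν (Iic x) ∂μ₀ = ∫⁻ y, μ₀ (Ico y c) ∂ν :=
        (setLIntegral_Iio_measure_Iic_eq measurable_id c).trans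
          (lintegral_congr fun _ => congrArg μ₀ (inter_comm _ _))
    _ ≤ ∫⁻ y, (ENNReal.ofReal |u₀ c| + ENNReal.ofReal |u₀ y|) ∂ν := lintegral_mono hbound
    _ < ⊤ := by
      rw [lintegral_add_left measurable_const, lintegral_const]
      exact ENNReal.add_lt_top.2
        ⟨ENNReal.mul_lt_top ENNReal.ofReal_lt_top (measure_lt_top ν univ), ha⟩

lemma integral_eq_mul_sub_lintegral {α : Type*} [MeasurableSpace α] {μ : Measure α}
    [IsFiniteMeasure μ] {f : α → ℝ} {a : ℝ} (hf : AEStronglyMeasurable f μ)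
    (hle : ∀ᵐ x ∂μ, f x ≤ a) (hfin : ∫⁻ x, ENNReal.ofReal (a - f x) ∂μ ≠ ⊤) :
    ∫ x, f x ∂μ = a * μ.real univ - (∫⁻ x, ENNReal.ofReal (a - f x) ∂μ).toReal := by
  have hnn : 0 ≤ᵐ[μ] fun x => a - f x := by
    filter_upwards [hle] with x hx using sub_nonneg.2 hx
  have hmeas : AEStronglyMeasurable (fun x => a - f x) μ := aestronglyMeasurable_const.sub hf
  have hint : Integrable (fun x => a - f x) μ :=
    ⟨hmeas, (hasFiniteIntegral_iff_ofReal hnn).2 hfin.lt_top⟩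
  calc ∫ x, f x ∂μ = ∫ x, (a - (a - f x)) ∂μ := by simp only [sub_sub_cancel]
    _ = _ := by
      rw [integral_sub (integrable_const a) hint, integral_const, smul_eq_mul, mul_comm,
        integral_eq_lintegral_of_nonneg_ae hnn hmeas]

namespace StandardPair

variable {u₀ v₀ F : ℝ → ℝ} {μ₀ η ν : Measure ℝ}

lemma setLIntegral_Iio_comp_cdf_ne_top (hp : StandardPair u₀ v₀) (hF : IsCDF F)
    (hμ₀ : IsLSL u₀ μ₀) (hν : IsLSR (fun x => v₀ (F x)) ν) (ha : CondA u₀ ν) (c : ℝ) :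
    ∫⁻ x in Iio c, ENNReal.ofReal (v₀ (F x)) ∂μ₀ ≠ ⊤ := by
  have hlim := hp.tendsto_comp_cdf_atBot hF
  have := hν.isFiniteMeasure hlim fun x => (hp.v_mem _ ⟨hF.nonneg x, hF.le_one x⟩).2
  exact (hμ₀.setLIntegral_Iio_lt_top (hν.measure_Iic hlim) ha c).ne

lemma setIntegral_comp_qf_eq (hp : StandardPair u₀ v₀) (hF : IsCDF F) (hμ₀ : IsLSL u₀ μ₀)
    (hη : IsLSR01 v₀ η) {c p : ℝ} (hfin : ∫⁻ x in Iio c, ENNReal.ofReal (v₀ (F x)) ∂μ₀ ≠ ⊤)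
    (hp0 : 0 < p) (hlow : ∀ x < c, F x ≤ p) (hhigh : p ≤ F c) :
    ∫ α in Ioc 0 p, u₀ (qf F α) ∂η
      = u₀ c * v₀ p - (∫⁻ x in Iio c, ENNReal.ofReal (v₀ (F x)) ∂μ₀).toReal := by
  have := hμ₀.sigmaFinite
  have hp1 : p ≤ 1 := hhigh.trans (hF.le_one c)
  have hη_Ioc : ∀ {q}, 0 ≤ q → q ≤ 1 → η (Ioc 0 q) = ENNReal.ofReal (v₀ q) := fun hq0 hq1 => by
    rw [hη 0 _ le_rfl hq0 hq1, hp.v_zero, sub_zero]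
  -- `qf F 1` is a junk value, so the point `1`, which is `η`-null, is removed from `(0, p]`.
  set s := Ioc 0 p \ {1}
  have hs : MeasurableSet s := measurableSet_Ioc.diff (measurableSet_singleton 1)
  have hη1 : η {1} = 0 := hη.measure_singleton_one (hp.v_one_eq_one.symm ▸ hp.v_one)
  have hrestrict : η.restrict (Ioc 0 p) = η.restrict s :=
    Measure.restrict_congr_set (sdiff_null_ae_eq_self hη1).symm
  have hs_sub : s ⊆ Ioo 0 1 := fun α hα =>
    ⟨hα.1.1, lt_of_le_of_ne (hα.1.2.trans hp1) hα.2⟩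
  have hqf_le : ∀ α ∈ s, qf F α ≤ c := fun α hα => hF.qf_le hα.1.1 (hα.1.2.trans hhigh)
  have : IsFiniteMeasure (η.restrict s) := hrestrict ▸ isFiniteMeasure_restrict.2
    (by rw [hη_Ioc hp0.le hp1]; exact ENNReal.ofReal_ne_top)
  have hkey : ∫⁻ α in s, ENNReal.ofReal (u₀ c - u₀ (qf F α)) ∂η
      = ∫⁻ x in Iio c, ENNReal.ofReal (v₀ (F x)) ∂μ₀ := by
    calc ∫⁻ α in s, ENNReal.ofReal (u₀ c - u₀ (qf F α)) ∂η
        = ∫⁻ α in s, μ₀ (Iio c ∩ {x | α ≤ F x}) ∂η := by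
          refine setLIntegral_congr_fun hs fun α hα => ?_
          have hsec : Iio c ∩ {x | α ≤ F x} = Ico (qf F α) c := by
            ext x
            simp only [mem_inter_iff, mem_Iio, mem_ofPred_eq, mem_Ico,
              hF.qf_le_iff (hs_sub hα).1 (hs_sub hα).2, and_comm]
          rw [hsec, hμ₀ _ _ (hqf_le α hα)]
      _ = ∫⁻ x in Iio c, η.restrict s (Iic (F x)) ∂μ₀ :=
          (setLIntegral_Iio_measure_Iic_eq hF.mono.measurable c).symm
      _ = ∫⁻ x in Iio c, ENNReal.ofReal (v₀ (F x)) ∂μ₀ := by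
          refine setLIntegral_congr_fun measurableSet_Iio fun x hx => ?_
          have hcap : Iic (F x) ∩ Ioc 0 p = Ioc 0 (F x) :=
            Iic_inter_Ioc_of_le (hlow x hx)
          rw [← hrestrict, Measure.restrict_apply measurableSet_Iic, hcap,
            hη_Ioc (hF.nonneg x) ((hlow x hx).trans hp1)]
  have hmeas : AEStronglyMeasurable (fun α => u₀ (qf F α)) (η.restrict s) :=
    (aemeasurable_restrict_of_monotoneOn hs
      (hp.u_mono.comp_monotoneOn (hF.monotoneOn_qf.mono hs_sub))).aestronglyMeasurable
  have hle : ∀ᵐ α ∂η.restrict s, u₀ (qf F α) ≤ u₀ c :=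
    (ae_restrict_mem hs).mono fun α hα => hp.u_mono (hqf_le α hα)
  rw [hrestrict, integral_eq_mul_sub_lintegral hmeas hle (hkey ▸ hfin), hkey, measureReal_def,
    ← hrestrict, Measure.restrict_apply_univ, hη_Ioc hp0.le hp1,
    ENNReal.toReal_ofReal (hp.v_mem p ⟨hp0.le, hp1⟩).1]

end StandardPair

/-- **Lemma 3, crossing points.**  Let `(u₀,v₀)` be a standard pair and
`F₁, F₂` cdf's satisfying condition (a).  If `x₀` is an up-crossing point of
`(F₁,F₂)` — i.e. `F₁(x₀⁻) ≤ F₂(x₀⁻) ≤ F₂(x₀) ≤ F₁(x₀)` with `F₁ < F₂` slightly below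
and `F₁ > F₂` slightly above — then
`∫_{-∞}^{x₀} v₀(F₁) du₀ ≥ ∫_{-∞}^{x₀} v₀(F₂) du₀` implies
`∫_0^p u₀(F₁⁻¹) dv₀ ≤ ∫_0^p u₀(F₂⁻¹) dv₀` for all `p ∈ [F₂(x₀⁻), F₂(x₀)]`.
Conversely, if `α₀` is an up-crossing value of `(F₁⁻¹, F₂⁻¹)`, then
`∫_0^{α₀} u₀(F₁⁻¹) dv₀ ≤ ∫_0^{α₀} u₀(F₂⁻¹) dv₀` implies
`∫_{-∞}^{c} v₀(F₁) du₀ ≥ ∫_{-∞}^{c} v₀(F₂) du₀` for all `c ∈ [F₂⁻¹(α₀), F₂⁻¹(α₀⁺)]`. -/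
theorem lemma3_crossing
    (u₀ v₀ F₁ F₂ : ℝ → ℝ) (hpair : StandardPair u₀ v₀)
    (hF₁ : IsCDF F₁) (hF₂ : IsCDF F₂)
    (μ₀ : Measure ℝ) (hμ₀ : IsLSL u₀ μ₀)
    (η : Measure ℝ) (hη : IsLSR01 v₀ η)
    (ν₁ ν₂ : Measure ℝ)
    (hν₁ : IsLSR (fun x => v₀ (F₁ x)) ν₁) (hν₂ : IsLSR (fun x => v₀ (F₂ x)) ν₂)
    (ha₁ : CondA u₀ ν₁) (ha₂ : CondA u₀ ν₂) :
    -- up-crossing point of (F₁, F₂)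
    (∀ x₀ : ℝ,
      Function.leftLim F₁ x₀ ≤ Function.leftLim F₂ x₀ → F₂ x₀ ≤ F₁ x₀ →
      (∃ ε > 0, ∀ δ : ℝ, 0 < δ → δ < ε →
        F₁ (x₀ - δ) < F₂ (x₀ - δ) ∧ F₂ (x₀ + δ) < F₁ (x₀ + δ)) →
      (∫⁻ x in Iio x₀, ENNReal.ofReal (v₀ (F₂ x)) ∂μ₀ ≤
          ∫⁻ x in Iio x₀, ENNReal.ofReal (v₀ (F₁ x)) ∂μ₀) →
      ∀ p : ℝ, Function.leftLim F₂ x₀ ≤ p → p ≤ F₂ x₀ →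
        ∫ α in Ioc 0 p, u₀ (qf F₁ α) ∂η ≤ ∫ α in Ioc 0 p, u₀ (qf F₂ α) ∂η) ∧
    -- up-crossing value of (F₁⁻¹, F₂⁻¹)
    (∀ α₀ : ℝ, 0 < α₀ → α₀ < 1 →
      qf F₁ α₀ ≤ qf F₂ α₀ →
      Function.rightLim (fun α => qf F₂ α) α₀ ≤ Function.rightLim (fun α => qf F₁ α) α₀ →
      (∃ ε > 0, ∀ δ : ℝ, 0 < δ → δ < ε →
        qf F₁ (α₀ - δ) < qf F₂ (α₀ - δ) ∧ qf F₂ (α₀ + δ) < qf F₁ (α₀ + δ)) →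
      (∫ α in Ioc 0 α₀, u₀ (qf F₁ α) ∂η ≤ ∫ α in Ioc 0 α₀, u₀ (qf F₂ α) ∂η) →
      ∀ c : ℝ, qf F₂ α₀ ≤ c → c ≤ Function.rightLim (fun α => qf F₂ α) α₀ →
        ∫⁻ x in Iio c, ENNReal.ofReal (v₀ (F₂ x)) ∂μ₀ ≤
          ∫⁻ x in Iio c, ENNReal.ofReal (v₀ (F₁ x)) ∂μ₀) := by
  have fin₁ := hpair.setLIntegral_Iio_comp_cdf_ne_top hF₁ hμ₀ hν₁ ha₁
  have fin₂ := hpair.setLIntegral_Iio_comp_cdf_ne_top hF₂ hμ₀ hν₂ ha₂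
  constructor
  · intro x₀ hleft hright _ hyp p hp_left hp_right
    rcases le_or_gt p 0 with hp0 | hp0
    · simp [Ioc_eq_empty_of_le hp0]
    rw [hpair.setIntegral_comp_qf_eq hF₁ hμ₀ hη (fin₁ x₀) hp0
        (fun x hx => (hF₁.mono.le_leftLim hx).trans (hleft.trans hp_left)) (hp_right.trans hright),
      hpair.setIntegral_comp_qf_eq hF₂ hμ₀ hη (fin₂ x₀) hp0
        (fun x hx => (hF₂.mono.le_leftLim hx).trans hp_left) hp_right]
    exact sub_le_sub_left (ENNReal.toReal_mono (fin₁ x₀) hyp) _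
  · intro α₀ h0 h1 hqf hrightLim _ hyp c hc_left hc_right
    rw [hpair.setIntegral_comp_qf_eq hF₁ hμ₀ hη (fin₁ c) h0
        (fun x hx => hF₁.le_of_lt_rightLim_qf h0 (hx.trans_le (hc_right.trans hrightLim)))
        ((hF₁.qf_le_iff h0 h1).1 (hqf.trans hc_left)),
      hpair.setIntegral_comp_qf_eq hF₂ hμ₀ hη (fin₂ c) h0
        (fun x hx => hF₂.le_of_lt_rightLim_qf h0 (hx.trans_le hc_right))
        ((hF₂.qf_le_iff h0 h1).1 hc_left)] at hyp
    exact (ENNReal.toReal_le_toReal (fin₂ c) (fin₁ c)).1 (by linarith)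

end
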